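/- arXiv:1911.01714 — 3 statements merged into one kernel-verified Lean document; each statement's English description precedes it below -/
import Mathlib

section
/- Let μ' = [μ; φ, γ] be an augmented valuation. Then μ(f) ≤ μ'(f) for all f ∈ K[x], and for nonzero f, μ(f) = μ'(f) holds if and only if φ does not μ-divide f (i.e. there is no q ∈ K[x] with μ(f − qφ·h) > μ(f) exhibiting in_μ φ | in_μ f). -/
/-!
Write `f = ∑ aₛ φˢ` with `deg aₛ < deg φ`. Because `φ` is μ-minimal,
`μ (a + φ g) = min (μ a) (μ (φ g))` whenever `deg a < deg φ`, so `μ f = minₛ (μ aₛ + s μ(φ))`.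
This is termwise at most `μ' f = minₛ (μ aₛ + s γ)`, with equality at `s = 0` and strict
inequality at every finite term with `s ≥ 1`; hence `μ f = μ' f` exactly when `μ a₀ ≤ μ f`. By minimality again, `φ ∣_μ f` exactly when
`μ f < μ a₀`, a witness being the quotient `q` in `f = a₀ + φ q`.
-/

open Polynomial Finset

variable {K : Type*} [Field K] {Λ : Type*} [AddCommGroup Λ] [LinearOrder Λ] [IsOrderedAddMonoid Λ]

/-- `v` is a valuation on the field `K` with values in `Λ∞ = WithTop Λ`. -/
def IsVal (v : K → WithTop Λ) : Prop :=
  (∀ a, v a = ⊤ ↔ a = 0) ∧ v 1 = 0 ∧ (∀ a b, v (a * b) = v a + v b) ∧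
    (∀ a b, min (v a) (v b) ≤ v (a + b))

/-- `μ` is a valuation on `K[x]` extending `v`. -/
def ExtVal (v : K → WithTop Λ) (μ : Polynomial K → WithTop Λ) : Prop :=
  (∀ f g, μ (f * g) = μ f + μ g) ∧ (∀ f g, min (μ f) (μ g) ≤ μ (f + g)) ∧
    (∀ a, μ (Polynomial.C a) = v a)

/-- `h` divides `g` μ-equivalently (`h ∣_μ g`): there is `q` with `μ(g - q h) > μ(g)`. -/
def MuDvd (μ : Polynomial K → WithTop Λ) (h g : Polynomial K) : Prop :=
  ∃ q : Polynomial K, μ g < μ (g - q * h)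

/-- `φ` is μ-minimal: `φ ∤_μ f` for every nonzero `f` of degree less than `deg φ`. -/
def MuMinimal (μ : Polynomial K → WithTop Λ) (φ : Polynomial K) : Prop :=
  ∀ f : Polynomial K, f ≠ 0 → f.degree < φ.degree → ¬ MuDvd μ φ f

/-- `φ` is μ-irreducible: the principal ideal generated by `in_μ φ` in the graded
algebra is a nonzero prime ideal (stated via μ-divisibility). -/
def MuIrreducible (μ : Polynomial K → WithTop Λ) (φ : Polynomial K) : Prop :=
  μ φ ≠ ⊤ ∧ ¬ MuDvd μ φ 1 ∧
    ∀ f g : Polynomial K, MuDvd μ φ (f * g) → MuDvd μ φ f ∨ MuDvd μ φ g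

/-- A (MacLane–Vaquié) key polynomial for `μ`. -/
def KeyPoly (μ : Polynomial K → WithTop Λ) (φ : Polynomial K) : Prop :=
  φ.Monic ∧ MuMinimal μ φ ∧ MuIrreducible μ φ

/-- `μ'` is the augmented valuation `[μ; φ, γ]`: on φ-expansions
`f = Σ a_s φ^s` (with `deg a_s < deg φ`), `μ' f = min_s (μ(a_s) + s·γ)`. -/
def AugVal (μ : Polynomial K → WithTop Λ) (φ : Polynomial K) (γ : WithTop Λ)
    (μ' : Polynomial K → WithTop Λ) : Prop :=
  ∀ (f : Polynomial K) (n : ℕ) (a : ℕ → Polynomial K),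
    (∀ s, (a s).degree < φ.degree) →
    f = ∑ s ∈ Finset.range n, a s * φ ^ s →
    μ' f = (Finset.range n).inf fun s => μ (a s) + s • γ

theorem Polynomial.sum_range_succ_mul_pow {R : Type*} [CommSemiring R] (a : ℕ → R[X]) (φ : R[X])
    (n : ℕ) :
    ∑ s ∈ range (n + 1), a s * φ ^ s = a 0 + φ * ∑ s ∈ range n, a (s + 1) * φ ^ s := by
  rw [sum_range_succ', mul_sum, pow_zero, mul_one, add_comm]
  simp only [pow_succ, mul_left_comm φ, mul_comm _ φ]

theorem Polynomial.exists_expansion {R : Type*} [CommRing R] [Nontrivial R] {φ : R[X]}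
    (hm : φ.Monic) (hd : 0 < φ.degree) (f : R[X]) :
    ∃ (n : ℕ) (a : ℕ → R[X]), (∀ s, (a s).degree < φ.degree) ∧
      f = ∑ s ∈ range n, a s * φ ^ s := by
  induction h : f.natDegree using Nat.strong_induction_on generalizing f with
  | _ N ih =>
  rcases eq_or_ne f 0 with rfl | hf
  · exact ⟨0, 0, fun _ => by simpa using bot_lt_of_lt hd, by simp⟩
  obtain ⟨n, b, hb, hq⟩ : ∃ (n : ℕ) (b : ℕ → R[X]), (∀ s, (b s).degree < φ.degree) ∧
      f /ₘ φ = ∑ s ∈ range n, b s * φ ^ s := by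
    rcases eq_or_ne (f /ₘ φ) 0 with hq | hq
    · exact ⟨0, 0, fun _ => by simpa using bot_lt_of_lt hd, by simpa using hq⟩
    · exact ih _ (h ▸ natDegree_lt_natDegree hq (degree_divByMonic_lt f φ hf hd)) _ rfl
  refine ⟨n + 1, fun s => Nat.casesOn s (f %ₘ φ) b, fun s => ?_, ?_⟩
  · cases s
    exacts [degree_modByMonic_lt f hm, hb _]
  · rw [sum_range_succ_mul_pow, ← hq]
    exact (modByMonic_add_div f φ).symm

theorem Finset.inf_range_succ {α : Type*} [SemilatticeInf α] [OrderTop α] (F : ℕ → α) (n : ℕ) :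
    (range (n + 1)).inf F = F 0 ⊓ (range n).inf fun s => F (s + 1) := by
  rw [range_add_one', inf_insert, inf_map]
  rfl

theorem Finset.inf_eq_inf_iff_le_inf {ι α : Type*} [LinearOrder α] [OrderTop α] {s : Finset ι}
    {x y : ι → α} {i₀ : ι} (hi₀ : i₀ ∈ s) (h₀ : x i₀ = y i₀) (hle : ∀ i ∈ s, x i ≤ y i)
    (hlt : ∀ i ∈ s, i ≠ i₀ → x i ≠ ⊤ → x i < y i) :
    s.inf x = s.inf y ↔ x i₀ ≤ s.inf x := by
  refine ⟨fun h => ?_, fun h => ?_⟩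
  · by_contra! hx
    refine h.not_lt ((Finset.lt_inf_iff (hx.trans_le le_top)).2 fun i hi => ?_)
    by_cases hii₀ : i = i₀
    · exact hii₀ ▸ h₀ ▸ hx
    by_cases htop : x i = ⊤
    · exact (hx.trans_le (htop ▸ le_top)).trans_le (hle i hi)
    · exact (Finset.inf_le hi).trans_lt (hlt i hi hii₀ htop)
  · exact le_antisymm (Finset.inf_mono_fun hle) (((Finset.inf_le hi₀).trans h₀.ge).trans h)

theorem WithTop.add_nsmul_lt_add_nsmul {c α β : WithTop Λ} {s : ℕ} (hs : s ≠ 0) (hαβ : α < β)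
    (hne : c + s • α ≠ ⊤) : c + s • α < c + s • β := by
  obtain ⟨hc, hα⟩ := WithTop.add_ne_top.1 hne
  refine WithTop.add_lt_add_left hc ?_
  obtain ⟨t, rfl⟩ := Nat.exists_eq_succ_of_ne_zero hs
  rw [succ_nsmul] at hα
  rw [succ_nsmul, succ_nsmul]
  calc t • α + α < t • α + β := WithTop.add_lt_add_left (WithTop.add_ne_top.1 hα).1 hαβ
    _ ≤ t • β + β := by gcongr

namespace ExtVal

variable {v : K → WithTop Λ} {μ : K[X] → WithTop Λ}

noncomputable def toAddValuation (hv : IsVal v) (hμ : ExtVal v μ) :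
    AddValuation K[X] (WithTop Λ) :=
  AddValuation.of μ (by rw [← C_0, hμ.2.2, (hv.1 0).2 rfl]) (by rw [← C_1, hμ.2.2, hv.2.1])
    hμ.2.1 hμ.1

end ExtVal

section

variable {w : AddValuation K[X] (WithTop Λ)} {φ : K[X]}

theorem MuMinimal.map_add_mul (hmin : MuMinimal w φ) {a : K[X]} (ha : a.degree < φ.degree)
    (g : K[X]) : w (a + φ * g) = min (w a) (w (φ * g)) := by
  rcases eq_or_ne a 0 with rfl | ha0
  · simp
  by_cases hne : w a = w (φ * g)
  · rw [← hne, min_self]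
    refine le_antisymm (not_lt.1 fun hlt => hmin a ha0 ha ⟨-g, ?_⟩)
      ((le_min le_rfl hne.le).trans (w.map_add _ _))
    rwa [neg_mul, sub_neg_eq_add, mul_comm]
  · exact w.map_add_of_distinct_val hne

theorem MuMinimal.muDvd_add_mul_iff (hmin : MuMinimal w φ) {a : K[X]} (ha : a.degree < φ.degree)
    (g : K[X]) : MuDvd w φ (a + φ * g) ↔ w (a + φ * g) < w a := by
  refine ⟨fun ⟨q, hq⟩ => (hmin.map_add_mul ha g ▸ min_le_left _ _).lt_of_ne fun heq => ?_,
    fun h => ⟨g, by rwa [← mul_comm φ g, add_sub_cancel_right]⟩⟩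
  have ha0 : a ≠ 0 := by
    rintro rfl
    exact (heq ▸ hq).ne_top (by simp)
  refine hmin a ha0 ha ⟨q - g, ?_⟩
  rwa [← heq, show a - (q - g) * φ = a + φ * g - q * φ by ring]

theorem MuMinimal.map_expansion (hmin : MuMinimal w φ) {a : ℕ → K[X]}
    (ha : ∀ s, (a s).degree < φ.degree) (n : ℕ) :
    w (∑ s ∈ range n, a s * φ ^ s) = (range n).inf fun s => w (a s) + s • w φ := by
  induction n generalizing a with
  | zero => simp
  | succ n ih =>
    rw [sum_range_succ_mul_pow, hmin.map_add_mul (ha 0), w.map_mul, ih fun s => ha (s + 1),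
      inf_range_succ, apply_inf_eq_inf_comp_of_linearOrder (w φ + ·)
        (fun _ _ h => add_le_add_right h _) (add_top _)]
    simp only [Function.comp_def, zero_nsmul, add_zero, succ_nsmul]
    congr 2 with s
    abel

theorem KeyPoly.degree_pos (hφ : KeyPoly w φ) : 0 < φ.degree := by
  by_contra! h
  have hφ1 : φ = 1 := hφ.1.natDegree_eq_zero.1 (natDegree_eq_zero_iff_degree_le_zero.2 h)
  exact hφ.2.2.2.1 ⟨1, by simp [hφ1]⟩

end

theorem augmentation_ge_and_equality_general (v : K → WithTop Λ) (μ : Polynomial K → WithTop Λ)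
    (hv : IsVal v) (hμ : ExtVal v μ)
    (φ : Polynomial K) (hφ : KeyPoly μ φ)
    (γ : WithTop Λ) (hγ : μ φ < γ)
    (μ' : Polynomial K → WithTop Λ) (haug : AugVal μ φ γ μ') :
    (∀ f : Polynomial K, μ f ≤ μ' f) ∧
      (∀ f : Polynomial K, f ≠ 0 → (μ f = μ' f ↔ ¬ MuDvd μ φ f)) := by
  let w := hμ.toAddValuation hv
  have hmin : MuMinimal w φ := hφ.2.1
  have hd : 0 < φ.degree := KeyPoly.degree_pos (w := w) hφ
  have hle (a : ℕ → K[X]) (s : ℕ) : μ (a s) + s • μ φ ≤ μ (a s) + s • γ := by gcongr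
  refine ⟨fun f => ?_, fun f hf => ?_⟩
  · obtain ⟨n, a, ha, rfl⟩ := exists_expansion hφ.1 hd f
    rw [haug _ n a ha rfl]
    exact (hmin.map_expansion ha n).trans_le (inf_mono_fun fun s _ => hle a s)
  · obtain ⟨_ | m, a, ha, rfl⟩ := exists_expansion hφ.1 hd f
    · simp at hf
    have hval : μ (∑ s ∈ range (m + 1), a s * φ ^ s) =
        (range (m + 1)).inf fun s => μ (a s) + s • μ φ := hmin.map_expansion ha (m + 1)
    have hdvd : MuDvd μ φ (∑ s ∈ range (m + 1), a s * φ ^ s) ↔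
        μ (∑ s ∈ range (m + 1), a s * φ ^ s) < μ (a 0) := by
      rw [sum_range_succ_mul_pow]
      exact hmin.muDvd_add_mul_iff (ha 0) _
    rw [haug _ _ a ha rfl, hdvd, hval, not_lt,
      inf_eq_inf_iff_le_inf (mem_range.2 (Nat.zero_lt_succ m)) (by simp) (fun s _ => hle a s)
        (fun s _ hs => WithTop.add_nsmul_lt_add_nsmul hs hγ)]
    simp

/-- for `μ' = [μ; φ, γ]` we have `μ ≤ μ'`, and for nonzero `f`,
`μ(f) = μ'(f)` iff `φ` does not μ-divide `f`. -/
theorem augmentation_ge_and_equality (v : K → WithTop Λ) (μ : Polynomial K → WithTop Λ)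
    (hv : IsVal v) (hμ : ExtVal v μ)
    (hsupp : ∀ f : Polynomial K, f ≠ 0 → μ f ≠ ⊤)
    (φ : Polynomial K) (hφ : KeyPoly μ φ)
    (γ : WithTop Λ) (hγ : μ φ < γ)
    (μ' : Polynomial K → WithTop Λ) (haug : AugVal μ φ γ μ') :
    (∀ f : Polynomial K, μ f ≤ μ' f) ∧
      (∀ f : Polynomial K, f ≠ 0 → (μ f = μ' f ↔ ¬ MuDvd μ φ f)) :=
  augmentation_ge_and_equality_general v μ hv hμ φ hφ γ hγ μ' haug
end

section
/- Let ρ < μ < ν be valuations on K[x] with values in a common ordered abelian group, all extending v. Then the sets of monic polynomials of minimal degree where the valuations differ satisfy Φ_{ρ,μ} = Φ_{ρ,ν}; in particular, for all f ∈ K[x], ρ(f) = ν(f) if and only if ρ(f) = μ(f). -/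
open Polynomial Finset

variable {K : Type*} [Field K] {Λ : Type*} [AddCommGroup Λ] [LinearOrder Λ] [IsOrderedAddMonoid Λ]

/-- The set `Φ_{ρ,μ}` of monic polynomials of minimal degree where `ρ` and `μ` differ. -/
def PhiSet (ρ μ : Polynomial K → WithTop Λ) : Set (Polynomial K) :=
  {φ | φ.Monic ∧ ρ φ < μ φ ∧ ∀ g : Polynomial K, g.Monic → ρ g < μ g → φ.degree ≤ g.degree}

/-! Fix `ψ ∈ Φ_{ρ,μ}`. Division by `ψ` writes every `f` as `a + ψ w` with `deg a < deg ψ`, and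
`ρ a = μ a` by minimality of `ψ`. For any `η ≤ η'` agreeing on `a` with `η ψ < η' ψ`, the term
`ψ w` gains value strictly unless it is `⊤`, so `η' f = η a` as soon as `η a ≤ η (ψ w)`, while `η f < η' f` otherwise.
Hence `ρ f = μ f` forces `ρ a ≤ ρ (ψ w)`, and then `μ f = ρ a = ν f` provided `μ a = ν a`.
The latter holds because `μ` and `ν` agree below `deg ψ`: else some `g ∈ Φ_{μ,ν}` has smaller
degree, and writing `ψ = r + g q` gives `μ ψ = min (μ r) (μ (g q)) = min (ρ r) (ρ (g q)) ≤ ρ ψ`. -/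

namespace ExtVal

variable {v : K → WithTop Λ} {η : K[X] → WithTop Λ}

omit [IsOrderedAddMonoid Λ] in
lemma map_zero (hv : IsVal v) (hη : ExtVal v η) : η 0 = ⊤ := by
  rw [← C_0, hη.2.2]
  exact (hv.1 0).2 rfl

omit [IsOrderedAddMonoid Λ] in
lemma map_one (hv : IsVal v) (hη : ExtVal v η) : η 1 = 0 := by
  rw [← C_1, hη.2.2, hv.2.1]

lemma map_neg (hv : IsVal v) (hη : ExtVal v η) (f : K[X]) : η (-f) = η f := by
  have hsq : η (-1) + η (-1) = 0 := by rw [← hη.1, neg_one_mul, neg_neg, hη.map_one hv]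
  have hne : η (-1) ≠ ⊤ := fun h => by simp [h] at hsq
  lift η (-1) to Λ using hne with x hx
  have hx0 : x = 0 := two_nsmul_eq_zero.mp (by rw [two_nsmul]; exact_mod_cast hsq)
  rw [← neg_one_mul, hη.1, ← hx, hx0, WithTop.coe_zero, zero_add]

lemma map_add_eq_left_of_lt (hv : IsVal v) (hη : ExtVal v η) {f g : K[X]} (h : η f < η g) :
    η (f + g) = η f := by
  have hle : η f ≤ η (f + g) := min_eq_left h.le ▸ hη.2.1 f g
  refine le_antisymm (not_lt.mp fun hlt => ?_) hle
  have := hη.2.1 (f + g) (-g)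
  rw [hη.map_neg hv, add_neg_cancel_right] at this
  exact this.not_gt (lt_min hlt h)

lemma map_add_of_ne (hv : IsVal v) (hη : ExtVal v η) {f g : K[X]} (h : η f ≠ η g) :
    η (f + g) = min (η f) (η g) := by
  rcases h.lt_or_gt with hlt | hlt
  · rw [min_eq_left hlt.le, hη.map_add_eq_left_of_lt hv hlt]
  · rw [min_eq_right hlt.le, add_comm, hη.map_add_eq_left_of_lt hv hlt]

lemma map_add_of_eq_top (hv : IsVal v) (hη : ExtVal v η) (f : K[X]) {g : K[X]} (h : η g = ⊤) :
    η (f + g) = η f := by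
  have hle : η f ≤ η (f + g) := by simpa [h] using hη.2.1 f g
  have hge : η (f + g) ≤ η f := by
    simpa [hη.map_neg hv, h] using hη.2.1 (f + g) (-g)
  exact le_antisymm hge hle

omit [IsOrderedAddMonoid Λ] in
lemma map_eq_map_monic_add (hη : ExtVal v η) {f : K[X]} (hf : f ≠ 0) :
    η f = η (f * C f.leadingCoeff⁻¹) + v f.leadingCoeff := by
  rw [← hη.2.2, ← hη.1, mul_assoc, ← C_mul, inv_mul_cancel₀ (leadingCoeff_ne_zero.mpr hf), C_1,
    mul_one]

end ExtVal

section TwoValuations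

variable {v : K → WithTop Λ} {η η' : K[X] → WithTop Λ}

omit [AddCommGroup Λ] [IsOrderedAddMonoid Λ] in
lemma PhiSet_congr {η₁ η₁' : K[X] → WithTop Λ} (h : ∀ f, η f < η' f ↔ η₁ f < η₁' f) :
    PhiSet η η' = PhiSet η₁ η₁' := by
  ext φ
  simp only [PhiSet, Set.mem_ofPred_eq, h]

variable (hv : IsVal v) (hη : ExtVal v η) (hη' : ExtVal v η')
include hv hη hη'

lemma exists_monic_lt_of_lt {f : K[X]} (h : η f < η' f) :
    ∃ g : K[X], g.Monic ∧ g.degree = f.degree ∧ η g < η' g := by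
  have hf : f ≠ 0 := by
    rintro rfl
    simp [hη.map_zero hv, hη'.map_zero hv] at h
  have hc : v f.leadingCoeff ≠ ⊤ := fun h => leadingCoeff_ne_zero.mpr hf ((hv.1 _).1 h)
  refine ⟨f * C f.leadingCoeff⁻¹, monic_mul_leadingCoeff_inv hf,
    degree_mul_leadingCoeff_inv f hf, (WithTop.add_lt_add_iff_right hc).mp ?_⟩
  rwa [← hη.map_eq_map_monic_add hf, ← hη'.map_eq_map_monic_add hf]

lemma exists_mem_PhiSet_of_lt {f : K[X]} (h : η f < η' f) :
    ∃ φ ∈ PhiSet η η', φ.degree ≤ f.degree := by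
  obtain ⟨g, hg, hgf, hlt⟩ := exists_monic_lt_of_lt hv hη hη' h
  let S : Set K[X] := {g | g.Monic ∧ η g < η' g}
  have hS : S.Nonempty := ⟨g, hg, hlt⟩
  obtain ⟨hφ, hφlt⟩ := Function.argminOn_mem degree S hS
  exact ⟨Function.argminOn degree S hS,
    ⟨hφ, hφlt, fun g' hg' hlt' => Function.argminOn_le degree S ⟨hg', hlt'⟩⟩,
    hgf ▸ Function.argminOn_le degree S ⟨hg, hlt⟩⟩

omit [IsOrderedAddMonoid Λ] in
lemma degree_pos_of_mem_PhiSet {φ : K[X]} (hφ : φ ∈ PhiSet η η') : 0 < φ.degree := by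
  refine not_le.mp fun h => ?_
  have := hφ.2.1
  rw [(hφ.1.degree_le_zero_iff_eq_one).mp h, hη.map_one hv, hη'.map_one hv] at this
  exact this.false

lemma eq_of_degree_lt_of_mem_PhiSet (hle : ∀ f, η f ≤ η' f) {φ f : K[X]}
    (hφ : φ ∈ PhiSet η η') (hf : f.degree < φ.degree) : η f = η' f := by
  refine (hle f).eq_of_not_lt fun h => ?_
  obtain ⟨g, hg, hgf, hlt⟩ := exists_monic_lt_of_lt hv hη hη' h
  exact (hφ.2.2 g hg hlt).not_gt (hgf ▸ hf)

variable (hle : ∀ f, η f ≤ η' f) {φ a w : K[X]} (hφ : η φ < η' φ) (ha : η a = η' a)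
include hle hφ ha

omit hv ha in
lemma map_mul_lt_map_mul (hw : η (φ * w) ≠ ⊤) : η (φ * w) < η' (φ * w) := by
  rw [hη.1] at hw ⊢
  rw [hη'.1]
  calc η φ + η w < η' φ + η w := WithTop.add_lt_add_right (WithTop.add_ne_top.mp hw).2 hφ
    _ ≤ η' φ + η' w := add_le_add le_rfl (hle w)

lemma map_add_mul_eq_of_le (h : η a ≤ η (φ * w)) : η' (a + φ * w) = η a := by
  by_cases htop : η (φ * w) = ⊤
  · rw [ha, hη'.map_add_of_eq_top hv _ (top_le_iff.mp (htop ▸ hle _))]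
  · rw [ha] at h ⊢
    exact hη'.map_add_eq_left_of_lt hv (h.trans_lt (map_mul_lt_map_mul hη hη' hle hφ htop))

lemma map_add_mul_eq_min : η (a + φ * w) = min (η a) (η (φ * w)) := by
  by_cases h : η a ≤ η (φ * w)
  · rw [min_eq_left h]
    refine le_antisymm ((hle _).trans (map_add_mul_eq_of_le hv hη hη' hle hφ ha h).le) ?_
    simpa [min_eq_left h] using hη.2.1 a (φ * w)
  · exact hη.map_add_of_ne hv (lt_of_not_ge h).ne'

lemma map_lt_map_add_mul_of_lt (h : η (φ * w) < η a) : η (a + φ * w) < η' (a + φ * w) := by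
  have hlt := map_mul_lt_map_mul hη hη' hle hφ h.ne_top
  rw [add_comm, hη.map_add_eq_left_of_lt hv h]
  exact (lt_min (h.trans_eq ha) hlt).trans_le (add_comm a _ ▸ hη'.2.1 _ _)

end TwoValuations

section ThreeValuations

variable {v : K → WithTop Λ} {ρ μ ν : K[X] → WithTop Λ}
  (hv : IsVal v) (hρ : ExtVal v ρ) (hμ : ExtVal v μ) (hν : ExtVal v ν)
  (hρμ : ∀ f, ρ f ≤ μ f) (hμν : ∀ f, μ f ≤ ν f) {ψ : K[X]} (hψ : ψ ∈ PhiSet ρ μ)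
include hv hρ hμ hν hρμ hμν hψ

lemma eq_of_degree_lt_of_mem_PhiSet_of_le {f : K[X]} (hf : f.degree < ψ.degree) : μ f = ν f := by
  refine (hμν f).eq_of_not_lt fun hlt => ?_
  obtain ⟨g, hg, hgf⟩ := exists_mem_PhiSet_of_lt hv hμ hν hlt
  have hgψ : g.degree < ψ.degree := hgf.trans_lt hf
  have hr : (ψ %ₘ g).degree < g.degree := degree_modByMonic_lt ψ hg.1
  have hq : (ψ /ₘ g).degree < ψ.degree :=
    degree_divByMonic_lt ψ g hψ.1.ne_zero (degree_pos_of_mem_PhiSet hv hμ hν hg)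
  have hρμ_below {p : K[X]} (hp : p.degree < ψ.degree) : ρ p = μ p :=
    eq_of_degree_lt_of_mem_PhiSet hv hρ hμ hρμ hψ hp
  have hμν_r : μ (ψ %ₘ g) = ν (ψ %ₘ g) :=
    eq_of_degree_lt_of_mem_PhiSet hv hμ hν hμν hg hr
  have hμψ_le : μ ψ ≤ ρ ψ := calc
    μ ψ = min (μ (ψ %ₘ g)) (μ (g * (ψ /ₘ g))) := by
      rw [← map_add_mul_eq_min hv hμ hν hμν hg.2.1 hμν_r, modByMonic_add_div]
    _ = min (ρ (ψ %ₘ g)) (ρ (g * (ψ /ₘ g))) := by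
      rw [hμ.1, hρ.1, hρμ_below (hr.trans hgψ), hρμ_below hgψ, hρμ_below hq]
    _ ≤ ρ ψ := by simpa only [modByMonic_add_div] using hρ.2.1 (ψ %ₘ g) (g * (ψ /ₘ g))
  exact hψ.2.1.not_ge hμψ_le

lemma eq_of_eq_of_mem_PhiSet {f : K[X]} (h : ρ f = μ f) : μ f = ν f := by
  have hdiv := modByMonic_add_div f ψ
  have hdeg : (f %ₘ ψ).degree < ψ.degree := degree_modByMonic_lt f hψ.1
  have hρμ_a := eq_of_degree_lt_of_mem_PhiSet hv hρ hμ hρμ hψ hdeg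
  have hμν_a := eq_of_degree_lt_of_mem_PhiSet_of_le hv hρ hμ hν hρμ hμν hψ hdeg
  have hle : ρ (f %ₘ ψ) ≤ ρ (ψ * (f /ₘ ψ)) := not_lt.mp fun hlt =>
    (map_lt_map_add_mul_of_lt hv hρ hμ hρμ hψ.2.1 hρμ_a hlt).ne (by rwa [hdiv])
  have hρν : ∀ p, ρ p ≤ ν p := fun p => (hρμ p).trans (hμν p)
  rw [← hdiv, map_add_mul_eq_of_le hv hρ hμ hρμ hψ.2.1 hρμ_a hle,
    map_add_mul_eq_of_le hv hρ hν hρν (hψ.2.1.trans_le (hμν ψ)) (hρμ_a.trans hμν_a) hle]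

end ThreeValuations

theorem PhiSet_eq_of_lt_lt_general (v : K → WithTop Λ) (ρ μ ν : Polynomial K → WithTop Λ)
    (hv : IsVal v) (hρ : ExtVal v ρ) (hμ : ExtVal v μ) (hν : ExtVal v ν)
    (hρμ : ∀ f : Polynomial K, ρ f ≤ μ f) (hρμne : ρ ≠ μ)
    (hμν : ∀ f : Polynomial K, μ f ≤ ν f) :
    PhiSet ρ μ = PhiSet ρ ν ∧ ∀ f : Polynomial K, (ρ f = ν f ↔ ρ f = μ f) := by
  obtain ⟨f₀, hf₀⟩ := Function.ne_iff.mp hρμne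
  obtain ⟨ψ, hψ, -⟩ := exists_mem_PhiSet_of_lt hv hρ hμ ((hρμ f₀).lt_of_ne hf₀)
  have hμν_of_eq {f : Polynomial K} (h : ρ f = μ f) : μ f = ν f :=
    eq_of_eq_of_mem_PhiSet hv hρ hμ hν hρμ hμν hψ h
  have hlt_iff (f : Polynomial K) : ρ f < μ f ↔ ρ f < ν f :=
    ⟨fun h => h.trans_le (hμν f),
      fun h => (hρμ f).lt_of_ne fun he => h.ne (he.trans (hμν_of_eq he))⟩
  refine ⟨PhiSet_congr hlt_iff, fun f => ⟨fun h => ?_, fun h => h.trans (hμν_of_eq h)⟩⟩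
  exact le_antisymm (hρμ f) (h ▸ hμν f)

/-- if `ρ < μ < ν` then `Φ_{ρ,μ} = Φ_{ρ,ν}`; in particular
`ρ(f) = ν(f)` iff `ρ(f) = μ(f)` for all `f`. -/
theorem PhiSet_eq_of_lt_lt (v : K → WithTop Λ) (ρ μ ν : Polynomial K → WithTop Λ)
    (hv : IsVal v) (hρ : ExtVal v ρ) (hμ : ExtVal v μ) (hν : ExtVal v ν)
    (hρμ : ∀ f : Polynomial K, ρ f ≤ μ f) (hρμne : ρ ≠ μ)
    (hμν : ∀ f : Polynomial K, μ f ≤ ν f) (hμνne : μ ≠ ν) :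
    PhiSet ρ μ = PhiSet ρ ν ∧ ∀ f : Polynomial K, (ρ f = ν f ↔ ρ f = μ f) :=
  PhiSet_eq_of_lt_lt_general v ρ μ ν hv hρ hμ hν hρμ hρμne hμν
end

section
/- (Sufficiency direction of unicity of ordinary augmentation) Let φ be a key polynomial for μ and φ* = φ + a with deg a < deg φ. If μ(a) ≥ γ for some γ ∈ Λ∞ with γ > μ(φ), then φ* is also monic of the same degree and the augmented valuations [μ; φ, γ] and [μ; φ*, γ] are equal. -/
open Polynomial Finset

variable {K : Type*} [Field K] {Λ : Type*} [AddCommGroup Λ] [LinearOrder Λ] [IsOrderedAddMonoid Λ]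

/-! Write `φ* = φ + a`. For φ-reduced `c`, division gives `c a = q φ + r`; μ-minimality of `φ`
makes `μ(q φ + r) = min (μ(q φ), μ(r))`, and `μ(c a) ≥ μ(c) + γ > μ(c) + μ(φ)` then forces
`μ(r) ≥ μ(c) + γ` and `μ(q) ≥ μ(c)`. By induction on `s`, `c φ*^s` therefore has a φ-expansion
all of whose terms have `[μ; φ, γ]`-weight at least `μ(c) + s γ`, whence `[μ; φ, γ] ≥ [μ; φ*, γ]`.
The situation is symmetric: `φ*` is again μ-minimal, `μ(φ*) = μ(φ)` and `φ = φ* + (-a)`, which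
gives the reverse inequality. -/

noncomputable def ExtVal.toAddValuation_s11 {v : K → WithTop Λ} {μ : K[X] → WithTop Λ} (hμ : ExtVal v μ)
    (hv : IsVal v) : AddValuation K[X] (WithTop Λ) :=
  AddValuation.of μ (by rw [← C_0, hμ.2.2, (hv.1 0).2 rfl]) (by rw [← C_1, hμ.2.2, hv.2.1])
    hμ.2.1 hμ.1

theorem Polynomial.degree_mul_divByMonic_lt {ψ c e : K[X]} (hψ : ψ.Monic) (hc : c.degree < ψ.degree)
    (he : e.degree < ψ.degree) : ((c * e) /ₘ ψ).degree < ψ.degree := by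
  rcases eq_or_ne c 0 with rfl | hc0
  · rwa [zero_mul, zero_divByMonic]
  rcases eq_or_ne e 0 with rfl | he0
  · rwa [mul_zero, zero_divByMonic]
  apply degree_lt_degree
  rw [natDegree_divByMonic _ hψ, natDegree_mul hc0 he0]
  have := natDegree_lt_natDegree hc0 hc
  have := natDegree_lt_natDegree he0 he
  omega

theorem Polynomial.Monic.exists_adic_expansion {ψ : K[X]} (hψ : ψ.Monic) (h0 : 0 < ψ.degree)
    (f : K[X]) : ∃ P : K[X][X], P.eval ψ = f ∧ ∀ j, (P.coeff j).degree < ψ.degree := by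
  induction h : f.natDegree using Nat.strong_induction_on generalizing f with
  | _ n ih =>
  by_cases hf : f.degree < ψ.degree
  · refine ⟨C f, eval_C, fun j => ?_⟩
    rw [coeff_C]
    split_ifs
    exacts [hf, bot_le.trans_lt hf]
  · have hlt : (f /ₘ ψ).natDegree < n := by
      have := natDegree_pos_iff_degree_pos.2 h0
      have := natDegree_le_natDegree (not_lt.1 hf)
      rw [natDegree_divByMonic _ hψ]
      omega
    obtain ⟨P, hP, hPd⟩ := ih _ hlt (f /ₘ ψ) rfl
    refine ⟨C (f %ₘ ψ) + P * X, ?_, fun j => ?_⟩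
    · rw [eval_add, eval_C, eval_mul_X, hP, mul_comm, modByMonic_add_div]
    · cases j with
      | zero => simpa using degree_modByMonic_lt f hψ
      | succ j => simpa [coeff_C] using hPd j

omit [IsOrderedAddMonoid Λ] in
theorem AugVal.apply_eval {μ μ' : K[X] → WithTop Λ} {ψ : K[X]} {γ : WithTop Λ}
    (h : AugVal μ ψ γ μ') {P : K[X][X]} (hP : ∀ j, (P.coeff j).degree < ψ.degree) :
    μ' (P.eval ψ) = (range (P.natDegree + 1)).inf fun j => μ (P.coeff j) + j • γ :=
  h _ _ _ hP (eval_eq_sum_range ψ)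

section MuMinimal

variable {w : AddValuation K[X] (WithTop Λ)} {φ : K[X]}

theorem muMinimal_iff_map_add_mul_le :
    MuMinimal w φ ↔ ∀ q r : K[X], r.degree < φ.degree → w (r + q * φ) ≤ w r := by
  constructor
  · intro h q r hr
    by_contra! hlt
    have hr0 : r ≠ 0 := by
      rintro rfl
      simp at hlt
    exact h r hr0 hr ⟨-q, by rwa [neg_mul, sub_neg_eq_add]⟩
  · rintro h f - hf ⟨q, hq⟩
    have := h (-q) f hf
    rw [neg_mul, ← sub_eq_add_neg] at this
    exact (hq.trans_le this).false

theorem MuMinimal.map_add_mul_le_min (h : MuMinimal w φ) {r : K[X]}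
    (hr : r.degree < φ.degree) (q : K[X]) : w (r + q * φ) ≤ min (w r) (w (q * φ)) := by
  have hle := muMinimal_iff_map_add_mul_le.1 h q r hr
  refine le_min hle ?_
  rcases lt_or_ge (w (q * φ)) (w r) with hlt | hge
  · exact (w.map_add_eq_of_lt_right hlt).le
  · exact hle.trans hge

theorem MuMinimal.add (h : MuMinimal w φ) {e : K[X]} (he : e.degree < φ.degree)
    (hφe : w φ < w e) : MuMinimal w (φ + e) := by
  rw [muMinimal_iff_map_add_mul_le, degree_add_eq_left_of_degree_lt he]
  intro q r hr
  by_cases hq : w q = ⊤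
  · have htop : w (q * (φ + e)) = ⊤ := by rw [w.map_mul, hq, top_add]
    rcases (le_top : w r ≤ ⊤).lt_or_eq with hlt | heq
    · rw [w.map_add_eq_of_lt_left (htop ▸ hlt)]
    · exact heq ▸ le_top
  · have hlt : w (r + q * φ) < w (q * e) :=
      calc w (r + q * φ) ≤ w (q * φ) := (h.map_add_mul_le_min hr q).trans (min_le_right _ _)
        _ = w q + w φ := w.map_mul _ _
        _ < w q + w e := WithTop.add_lt_add_left hq hφe
        _ = w (q * e) := (w.map_mul _ _).symm
    calc w (r + q * (φ + e)) = w (r + q * φ + q * e) := by rw [mul_add, add_assoc]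
      _ = w (r + q * φ) := w.map_add_eq_of_lt_left hlt
      _ ≤ w r := (h.map_add_mul_le_min hr q).trans (min_le_left _ _)

theorem degree_pos_of_not_muDvd_one (hφ : φ.Monic) (h : ¬ MuDvd w φ 1) : 0 < φ.degree := by
  by_contra! hle
  rw [hφ.degree_le_zero_iff_eq_one] at hle
  exact h ⟨1, by simp [hle]⟩

end MuMinimal

/-- `P : K[X][X]` encodes the ψ-expansion `f = Σ P_j ψ^j`; each of its terms has weight
`w (P_j) + j γ ≥ t`. -/
def HasExpansionGE (w : AddValuation K[X] (WithTop Λ)) (ψ : K[X]) (γ t : WithTop Λ)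
    (f : K[X]) : Prop :=
  ∃ P : K[X][X], P.eval ψ = f ∧ (∀ j, (P.coeff j).degree < ψ.degree) ∧
    ∀ j, t ≤ w (P.coeff j) + j • γ

namespace HasExpansionGE

variable {w : AddValuation K[X] (WithTop Λ)} {ψ e f g : K[X]} {γ t t' : WithTop Λ}

theorem le_of_augVal {μ' : K[X] → WithTop Λ} (h : HasExpansionGE w ψ γ t f)
    (hμ' : AugVal w ψ γ μ') : t ≤ μ' f := by
  obtain ⟨P, rfl, hd, ht⟩ := h
  rw [hμ'.apply_eval hd]
  exact Finset.le_inf fun j _ => ht j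

theorem mono (h : HasExpansionGE w ψ γ t f) (ht : t' ≤ t) : HasExpansionGE w ψ γ t' f :=
  let ⟨P, hP, hd, hP'⟩ := h
  ⟨P, hP, hd, fun j => ht.trans (hP' j)⟩

theorem of_degree_lt (hf : f.degree < ψ.degree) : HasExpansionGE w ψ γ (w f) f := by
  refine ⟨C f, eval_C, fun j => ?_, fun j => ?_⟩ <;> rw [coeff_C] <;> split_ifs with hj
  · exact hf
  · exact bot_le.trans_lt hf
  · simp [hj]
  · simp

theorem zero (hψ : ψ ≠ 0) : HasExpansionGE w ψ γ t 0 :=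
  (of_degree_lt (by rwa [degree_zero, bot_lt_iff_ne_bot, Ne, degree_eq_bot])).mono
    (by rw [w.map_zero]; exact le_top)

theorem add (hf : HasExpansionGE w ψ γ t f) (hg : HasExpansionGE w ψ γ t g) :
    HasExpansionGE w ψ γ t (f + g) := by
  obtain ⟨P, rfl, hPd, hPt⟩ := hf
  obtain ⟨Q, rfl, hQd, hQt⟩ := hg
  refine ⟨P + Q, eval_add, fun j => ?_, fun j => ?_⟩ <;> rw [coeff_add]
  · exact (degree_add_le _ _).trans_lt (max_lt (hPd j) (hQd j))
  · calc t ≤ min (w (P.coeff j)) (w (Q.coeff j)) + j • γ := by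
          rw [← min_add_add_right]; exact le_min (hPt j) (hQt j)
      _ ≤ _ := add_le_add_left (w.map_add _ _) _

theorem sum {ι : Type*} (s : Finset ι) {f : ι → K[X]} (hψ : ψ ≠ 0)
    (h : ∀ i ∈ s, HasExpansionGE w ψ γ t (f i)) : HasExpansionGE w ψ γ t (∑ i ∈ s, f i) :=
  Finset.sum_induction _ _ (fun _ _ => add) (zero hψ) h

theorem mul_self (h : HasExpansionGE w ψ γ t f) : HasExpansionGE w ψ γ (t + γ) (f * ψ) := by
  obtain ⟨P, rfl, hd, ht⟩ := h
  refine ⟨P * X, eval_mul_X, fun j => ?_, fun j => ?_⟩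
  · cases j with
    | zero => simpa using bot_le.trans_lt (hd 0)
    | succ j => rw [coeff_mul_X]; exact hd j
  · cases j with
    | zero => simp
    | succ j =>
      rw [coeff_mul_X, succ_nsmul, ← add_assoc]
      exact add_le_add_left (ht j) γ

theorem mul_pow (h : HasExpansionGE w ψ γ t f) (n : ℕ) :
    HasExpansionGE w ψ γ (t + n • γ) (f * ψ ^ n) := by
  induction n with
  | zero => simpa using h
  | succ n ih =>
    rw [succ_nsmul, ← add_assoc, pow_succ, ← mul_assoc]
    exact ih.mul_self

section Augment

variable (hψ : ψ.Monic) (hmin : MuMinimal w ψ) (hψγ : w ψ < γ) (he : e.degree < ψ.degree)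
  (hγe : γ ≤ w e)
include hψ hmin hψγ he hγe

theorem mul_of_degree_lt {c : K[X]} (hc : c.degree < ψ.degree) :
    HasExpansionGE w ψ γ (w c + γ) (c * e) := by
  set q := (c * e) /ₘ ψ
  set r := (c * e) %ₘ ψ
  have hce : c * e = r + q * ψ := by rw [mul_comm q, modByMonic_add_div]
  have hr : r.degree < ψ.degree := degree_modByMonic_lt _ hψ
  have hbound : w c + γ ≤ min (w r) (w (q * ψ)) :=
    calc w c + γ ≤ w (c * e) := by rw [w.map_mul]; exact add_le_add_right hγe _
      _ ≤ _ := by rw [hce]; exact hmin.map_add_mul_le_min hr q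
  have hq : w c ≤ w q := by
    refine (WithTop.add_le_add_iff_right hψγ.ne_top).1 ?_
    calc w c + w ψ ≤ w c + γ := add_le_add_right hψγ.le _
      _ ≤ w (q * ψ) := hbound.trans (min_le_right _ _)
      _ = w q + w ψ := w.map_mul _ _
  rw [hce]
  exact ((of_degree_lt hr).mono (hbound.trans (min_le_left _ _))).add
    ((of_degree_lt (degree_mul_divByMonic_lt hψ hc he)).mul_self.mono (add_le_add_left hq γ))

theorem mul (h : HasExpansionGE w ψ γ t f) : HasExpansionGE w ψ γ (t + γ) (f * e) := by
  obtain ⟨P, rfl, hd, ht⟩ := h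
  rw [eval_eq_sum_range, sum_mul]
  refine sum _ hψ.ne_zero fun j _ => ?_
  rw [mul_right_comm]
  refine ((mul_of_degree_lt hψ hmin hψγ he hγe (hd j)).mul_pow j).mono ?_
  rw [add_right_comm]
  exact add_le_add_left (ht j) γ

theorem mul_self_add (h : HasExpansionGE w ψ γ t f) :
    HasExpansionGE w ψ γ (t + γ) (f * (ψ + e)) := by
  rw [mul_add]
  exact h.mul_self.add (h.mul hψ hmin hψγ he hγe)

theorem mul_pow_self_add {b : K[X]} (hb : b.degree < ψ.degree) (n : ℕ) :
    HasExpansionGE w ψ γ (w b + n • γ) (b * (ψ + e) ^ n) := by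
  induction n with
  | zero => simpa using of_degree_lt hb
  | succ n ih =>
    rw [succ_nsmul, ← add_assoc, pow_succ, ← mul_assoc]
    exact ih.mul_self_add hψ hmin hψγ he hγe

theorem eval_self_add {Q : K[X][X]} (hQ : ∀ j, (Q.coeff j).degree < ψ.degree) :
    HasExpansionGE w ψ γ ((range (Q.natDegree + 1)).inf fun j => w (Q.coeff j) + j • γ)
      (Q.eval (ψ + e)) := by
  rw [eval_eq_sum_range]
  exact sum _ hψ.ne_zero fun j hj =>
    (mul_pow_self_add hψ hmin hψγ he hγe (hQ j) j).mono (inf_le hj)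

end Augment

end HasExpansionGE

theorem augVal_add_le_augVal {w : AddValuation K[X] (WithTop Λ)} {ψ e : K[X]} {γ : WithTop Λ}
    (hψ : ψ.Monic) (h0 : 0 < ψ.degree) (hmin : MuMinimal w ψ) (hψγ : w ψ < γ)
    (he : e.degree < ψ.degree) (hγe : γ ≤ w e) {μ₁ μ₂ : K[X] → WithTop Λ}
    (h₁ : AugVal w ψ γ μ₁) (h₂ : AugVal w (ψ + e) γ μ₂) (f : K[X]) : μ₂ f ≤ μ₁ f := by
  have hdeg : (ψ + e).degree = ψ.degree := degree_add_eq_left_of_degree_lt he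
  obtain ⟨Q, rfl, hQ⟩ :=
    (hψ.add_of_left he).exists_adic_expansion (hdeg ▸ h0) f
  rw [h₂.apply_eval hQ]
  rw [hdeg] at hQ
  exact (HasExpansionGE.eval_self_add hψ hmin hψγ he hγe hQ).le_of_augVal h₁

/-- sufficiency in unicity of ordinary augmentations: if
`φ* = φ + a` with `deg a < deg φ` and `μ(a) ≥ γ > μ(φ)`, then `φ*` is monic of the
same degree and `[μ; φ, γ] = [μ; φ*, γ]`. -/
theorem unicity_ordinary_augmentation_suff (v : K → WithTop Λ)
    (μ : Polynomial K → WithTop Λ) (hv : IsVal v) (hμ : ExtVal v μ)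
    (φ : Polynomial K) (hφ : KeyPoly μ φ)
    (a : Polynomial K) (ha : a.degree < φ.degree)
    (φs : Polynomial K) (hφs : φs = φ + a)
    (γ : WithTop Λ) (hγ : μ φ < γ) (hge : γ ≤ μ a) :
    φs.Monic ∧ φs.degree = φ.degree ∧
      ∀ μ' μs' : Polynomial K → WithTop Λ,
        AugVal μ φ γ μ' → AugVal μ φs γ μs' → μ' = μs' := by
  obtain ⟨w, rfl⟩ : ∃ w : AddValuation K[X] (WithTop Λ), ⇑w = μ := ⟨hμ.toAddValuation_s11 hv, rfl⟩
  obtain ⟨hφm, hmin, -, hφ1, -⟩ := hφ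
  subst hφs
  have hdeg : (φ + a).degree = φ.degree := degree_add_eq_left_of_degree_lt ha
  have h0 : 0 < φ.degree := degree_pos_of_not_muDvd_one hφm hφ1
  have hφa : w φ < w a := hγ.trans_le hge
  have hγs : w (φ + a) < γ := by rwa [w.map_add_eq_of_lt_left hφa]
  refine ⟨hφm.add_of_left ha, hdeg, fun μ' μs' h₁ h₂ => funext fun f => le_antisymm ?_ ?_⟩
  · refine augVal_add_le_augVal (e := -a) (hφm.add_of_left ha) (hdeg ▸ h0) (hmin.add ha hφa) hγs
      (by rwa [degree_neg, hdeg]) (by rwa [w.map_neg]) h₂ ?_ f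
    rwa [add_neg_cancel_right]
  · exact augVal_add_le_augVal hφm h0 hmin hγ ha hge h₁ h₂ f
end
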